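/- arXiv:1712.02291 — 4 statements merged into one kernel-verified Lean document; each statement's English description precedes it below -/
import Mathlib

section
/- For any square-summable sequence a: ℤ → ℝ and Δx > 0, one has ⟨D(a), 𝒮⁻a · 𝒮⁺a⟩ = -(4Δx²/3) ⟨D(a), (D(a))²⟩, where D is the centered difference and 𝒮^± are the shift operators. -/
noncomputable section
def Dc (Δx : ℝ) (a : ℤ → ℝ) : ℤ → ℝ := fun j => (a (j + 1) - a (j - 1)) / (2 * Δx)
def ip (Δx : ℝ) (u v : ℤ → ℝ) : ℝ := Δx * ∑' j : ℤ, u j * v j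

lemma aux_sq_shift (a : ℤ → ℝ) (ha : Summable fun j : ℤ => (a j) ^ 2) (s : ℤ) :
    Summable fun j : ℤ => (a (j + s)) ^ 2 :=
  ((Equiv.addRight s).summable_iff (f := fun j : ℤ => (a j) ^ 2)).mpr ha

lemma aux_sum (a : ℤ → ℝ) (ha : Summable fun j : ℤ => (a j) ^ 2) (s t : ℤ) :
    Summable fun j : ℤ => (a (j + s)) ^ 2 * a (j + t) := by
  set M := Real.sqrt (∑' i : ℤ, (a i) ^ 2) with hMdef
  have hM : ∀ j : ℤ, |a j| ≤ M := by
    intro j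
    rw [← Real.sqrt_sq_eq_abs]
    exact Real.sqrt_le_sqrt (Summable.le_tsum ha j fun i _ => sq_nonneg _)
  refine Summable.of_abs ?_
  refine Summable.of_nonneg_of_le (fun j => abs_nonneg _) (fun j => ?_)
    ((aux_sq_shift a ha s).mul_right M)
  rw [abs_mul, abs_of_nonneg (sq_nonneg (a (j + s)))]
  exact mul_le_mul_of_nonneg_left (hM _) (sq_nonneg _)

/-- `⟨D(a), 𝒮⁻a·𝒮⁺a⟩ = -(4Δx²/3)⟨D(a), (D(a))²⟩`. -/
theorem stmt8 (Δx : ℝ) (hΔx : 0 < Δx) (a : ℤ → ℝ)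
    (ha : Summable fun j : ℤ => (a j) ^ 2) :
    ip Δx (Dc Δx a) (fun j => a (j - 1) * a (j + 1))
      = -(4 * Δx ^ 2 / 3) * ip Δx (Dc Δx a) (fun j => (Dc Δx a j) ^ 2) := by
  have hne : Δx ≠ 0 := ne_of_gt hΔx
  have hA : Summable fun j : ℤ => (a (j + 1)) ^ 2 * a (j - 1) := by
    simpa [sub_eq_add_neg] using aux_sum a ha 1 (-1)
  have hB : Summable fun j : ℤ => (a (j - 1)) ^ 2 * a (j + 1) := by
    simpa [sub_eq_add_neg] using aux_sum a ha (-1) 1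
  have hC : Summable fun j : ℤ => (a (j + 1)) ^ 2 * a (j + 1) := aux_sum a ha 1 1
  set A := ∑' j : ℤ, (a (j + 1)) ^ 2 * a (j - 1) with hAdef
  set B := ∑' j : ℤ, (a (j - 1)) ^ 2 * a (j + 1) with hBdef
  set C := ∑' j : ℤ, (a (j + 1)) ^ 2 * a (j + 1) with hCdef
  have SA : HasSum (fun j : ℤ => (a (j + 1)) ^ 2 * a (j - 1)) A := hA.hasSum
  have SB : HasSum (fun j : ℤ => (a (j - 1)) ^ 2 * a (j + 1)) B := hB.hasSum
  have SC : HasSum (fun j : ℤ => (a (j + 1)) ^ 2 * a (j + 1)) C := hC.hasSum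
  -- shift invariance: ∑ a(j-1)³ = ∑ a(j+1)³
  have SD : HasSum (fun j : ℤ => (a (j - 1)) ^ 2 * a (j - 1)) C := by
    refine ((Equiv.addRight (2 : ℤ)).hasSum_iff
      (f := fun j : ℤ => (a (j - 1)) ^ 2 * a (j - 1)) (a := C)).mp ?_
    have he : ((fun j : ℤ => (a (j - 1)) ^ 2 * a (j - 1)) ∘ (Equiv.addRight (2 : ℤ)))
        = fun j : ℤ => (a (j + 1)) ^ 2 * a (j + 1) := by
      funext j
      have h2 : j + 2 - 1 = j + 1 := by ring
      simp [Function.comp, Equiv.addRight, h2]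
    rw [he]
    exact SC
  -- first sum
  have h1 : HasSum (fun j : ℤ => Dc Δx a j * (a (j - 1) * a (j + 1)))
      ((A - B) / (2 * Δx)) := by
    have h := (SA.sub SB).div_const (2 * Δx)
    have he : (fun j : ℤ => ((a (j + 1)) ^ 2 * a (j - 1) - (a (j - 1)) ^ 2 * a (j + 1)) / (2 * Δx))
        = fun j : ℤ => Dc Δx a j * (a (j - 1) * a (j + 1)) := by
      funext j; simp only [Dc]; ring
    rwa [he] at h
  -- second sum
  have h2 : HasSum (fun j : ℤ => Dc Δx a j * (Dc Δx a j) ^ 2)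
      ((C - 3 * A + 3 * B - C) / (2 * Δx) ^ 3) := by
    have h := (((SC.sub (SA.mul_left 3)).add (SB.mul_left 3)).sub SD).div_const ((2 * Δx) ^ 3)
    have he : (fun j : ℤ => ((a (j + 1)) ^ 2 * a (j + 1) - 3 * ((a (j + 1)) ^ 2 * a (j - 1))
          + 3 * ((a (j - 1)) ^ 2 * a (j + 1)) - (a (j - 1)) ^ 2 * a (j - 1)) / (2 * Δx) ^ 3)
        = fun j : ℤ => Dc Δx a j * (Dc Δx a j) ^ 2 := by
      funext j
      simp only [Dc]
      field_simp
      ring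
    rwa [he] at h
  rw [ip, ip, h1.tsum_eq, h2.tsum_eq]
  field_simp
  ring
end
end

section
/- For any square-summable sequence a: ℤ → ℝ and Δx > 0, one has ⟨a, D(a²/2)⟩ = -(Δx²/12) ⟨D₊(a), (D₊(a))²⟩, where D is the centered difference and a² the pointwise square. -/
noncomputable section
def Dp (Δx : ℝ) (a : ℤ → ℝ) : ℤ → ℝ := fun j => (a (j + 1) - a j) / Δx
/-- `⟨a, D(a²/2)⟩ = -(Δx²/12)⟨D₊(a), (D₊(a))²⟩`. -/
theorem stmt9 (Δx : ℝ) (hΔx : 0 < Δx) (a : ℤ → ℝ)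
    (ha : Summable fun j : ℤ => (a j) ^ 2) :
    ip Δx a (Dc Δx (fun i => (a i) ^ 2 / 2))
      = -(Δx ^ 2 / 12) * ip Δx (Dp Δx a) (fun j => (Dp Δx a j) ^ 2) := by
  set M : ℝ := Real.sqrt (∑' i : ℤ, a i ^ 2) with hMdef
  have hb : ∀ j, |a j| ≤ M := by
    intro j
    have h1 : a j ^ 2 ≤ ∑' i : ℤ, a i ^ 2 := Summable.le_tsum ha j (fun i _ => sq_nonneg _)
    calc |a j| = Real.sqrt (a j ^ 2) := (Real.sqrt_sq_eq_abs _).symm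
      _ ≤ M := Real.sqrt_le_sqrt h1
  have prod_sum : ∀ (b g : ℤ → ℝ), (∀ j, |b j| ≤ M) → Summable (fun j => g j ^ 2) →
      Summable (fun j => b j * g j ^ 2) := by
    intro b g hbM hg
    apply Summable.of_abs
    apply Summable.of_nonneg_of_le (fun j => abs_nonneg _) _ (hg.mul_left M)
    intro j
    calc |b j * g j ^ 2| = |b j| * (g j ^ 2) := by
          rw [abs_mul, abs_pow, sq_abs]
      _ ≤ M * g j ^ 2 := mul_le_mul_of_nonneg_right (hbM j) (sq_nonneg _)
  have hshift : ∀ c : ℤ, Summable (fun j => a (j + c) ^ 2) := by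
    intro c
    exact ha.comp_injective (add_left_injective c)
  have hsub : Summable (fun j : ℤ => a (j - 1) ^ 2) := by
    simpa [sub_eq_add_neg] using hshift (-1)
  have S1 : Summable (fun j : ℤ => a j * a (j + 1) ^ 2) :=
    prod_sum a (fun j => a (j + 1)) hb (hshift 1)
  have S2 : Summable (fun j : ℤ => a j * a (j - 1) ^ 2) :=
    prod_sum a (fun j => a (j - 1)) hb hsub
  have S3 : Summable (fun j : ℤ => a (j + 1) * a j ^ 2) :=
    prod_sum (fun j => a (j + 1)) a (fun j => hb _) ha
  have S5 : Summable (fun j : ℤ => a j ^ 3) :=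
    (prod_sum a a hb ha).congr (fun j => by ring)
  have S5s : Summable (fun j : ℤ => a (j + 1) ^ 3) :=
    (prod_sum (fun j => a (j + 1)) (fun j => a (j + 1)) (fun j => hb _) (hshift 1)).congr
      (fun j => by ring)
  have S4 : Summable (fun j : ℤ => (a (j + 1) - a j) ^ 3) :=
    (((S5s.sub (S1.mul_left 3)).add (S3.mul_left 3)).sub S5).congr (fun j => by ring)
  have tshift : ∀ f : ℤ → ℝ, ∑' j : ℤ, f (j + 1) = ∑' j : ℤ, f j := by
    intro f
    exact (Equiv.addRight (1 : ℤ)).tsum_eq f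
  -- Step A : shifting
  have hA : ∑' j : ℤ, a j * a (j - 1) ^ 2 = ∑' j : ℤ, a (j + 1) * a j ^ 2 := by
    rw [← tshift (fun j => a j * a (j - 1) ^ 2)]
    simp
  -- Step B : telescoping
  have hB : ∑' j : ℤ, (a (j + 1) ^ 3 - a j ^ 3) = 0 := by
    rw [Summable.tsum_sub S5s S5, tshift (fun j => a j ^ 3), sub_self]
  -- Step C : the cube identity
  have hC : ∑' j : ℤ, (a (j + 1) - a j) ^ 3
      = 3 * (∑' j : ℤ, a (j + 1) * a j ^ 2) - 3 * (∑' j : ℤ, a j * a (j + 1) ^ 2) := by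
    have e1 : ∑' j : ℤ, ((a (j + 1) - a j) ^ 3 + 3 * (a j * a (j + 1) ^ 2)
        - 3 * (a (j + 1) * a j ^ 2)) = 0 := by
      rw [tsum_congr (fun j => show ((a (j + 1) - a j) ^ 3 + 3 * (a j * a (j + 1) ^ 2)
        - 3 * (a (j + 1) * a j ^ 2)) = a (j + 1) ^ 3 - a j ^ 3 from by ring)]
      exact hB
    have e2 : ∑' j : ℤ, ((a (j + 1) - a j) ^ 3 + 3 * (a j * a (j + 1) ^ 2)
        - 3 * (a (j + 1) * a j ^ 2))
        = (∑' j : ℤ, (a (j + 1) - a j) ^ 3) + 3 * (∑' j : ℤ, a j * a (j + 1) ^ 2)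
          - 3 * (∑' j : ℤ, a (j + 1) * a j ^ 2) := by
      rw [Summable.tsum_sub (S4.add (S1.mul_left 3)) (S3.mul_left 3),
        Summable.tsum_add S4 (S1.mul_left 3), tsum_mul_left, tsum_mul_left]
    linarith [e2.symm.trans e1]
  -- Now unfold everything
  have hΔ : (Δx : ℝ) ≠ 0 := ne_of_gt hΔx
  have hL : ip Δx a (Dc Δx (fun i => (a i) ^ 2 / 2))
      = Δx * ((1 / (4 * Δx)) * ((∑' j : ℤ, a j * a (j + 1) ^ 2)
          - ∑' j : ℤ, a j * a (j - 1) ^ 2)) := by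
    unfold ip Dc
    congr 1
    rw [tsum_congr (fun j => show a j * ((a (j + 1) ^ 2 / 2 - a (j - 1) ^ 2 / 2) / (2 * Δx))
      = (1 / (4 * Δx)) * (a j * a (j + 1) ^ 2 - a j * a (j - 1) ^ 2) from by
        field_simp; ring)]
    rw [tsum_mul_left, Summable.tsum_sub S1 S2]
  have hR : ip Δx (Dp Δx a) (fun j => (Dp Δx a j) ^ 2)
      = Δx * ((1 / Δx ^ 3) * ∑' j : ℤ, (a (j + 1) - a j) ^ 3) := by
    unfold ip
    congr 1
    rw [tsum_congr (fun j => show Dp Δx a j * (Dp Δx a j) ^ 2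
      = (1 / Δx ^ 3) * (a (j + 1) - a j) ^ 3 from by
        unfold Dp; field_simp)]
    rw [tsum_mul_left]
  rw [hL, hR, hA, hC]
  field_simp
  ring
end
end

section
/- For any square-summable sequence a: ℤ → ℝ and Δx > 0, one has ⟨D(a²/2), D₊D₋(a)⟩ = (1/6) ⟨D₊(a), (D₊(a))²⟩ - (2/3) ⟨D(a), (D(a))²⟩. -/
noncomputable section
def Dm (Δx : ℝ) (a : ℤ → ℝ) : ℤ → ℝ := fun j => (a j - a (j - 1)) / Δx
set_option maxHeartbeats 1000000 in
/-- `⟨D(a²/2), D₊D₋(a)⟩ = (1/6)⟨D₊(a), (D₊(a))²⟩ - (2/3)⟨D(a), (D(a))²⟩`. -/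
theorem stmt10 (Δx : ℝ) (hΔx : 0 < Δx) (a : ℤ → ℝ)
    (ha : Summable fun j : ℤ => (a j) ^ 2) :
    ip Δx (Dc Δx (fun i => (a i) ^ 2 / 2)) (Dp Δx (Dm Δx a))
      = (1 / 6) * ip Δx (Dp Δx a) (fun j => (Dp Δx a j) ^ 2)
        - (2 / 3) * ip Δx (Dc Δx a) (fun j => (Dc Δx a j) ^ 2) := by
  have hΔ : Δx ≠ 0 := ne_of_gt hΔx
  set M := Real.sqrt (∑' i, (a i) ^ 2) with hMdef
  have hM0 : 0 ≤ M := Real.sqrt_nonneg _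
  have hb : ∀ j, |a j| ≤ M := by
    intro j
    have h1 : (a j) ^ 2 ≤ ∑' i, (a i) ^ 2 := Summable.le_tsum ha j (fun i _ => sq_nonneg _)
    have h2 := Real.sqrt_le_sqrt h1
    rwa [Real.sqrt_sq_eq_abs] at h2
  have hs2 : ∀ i : ℤ, Summable (fun j => (a (j + i)) ^ 2) := fun i =>
    (Equiv.addRight i).summable_iff.mpr ha
  have key : ∀ (c : ℝ) (i₁ i₂ i₃ : ℤ),
      Summable (fun j => c * (a (j + i₁) * a (j + i₂) * a (j + i₃))) := by
    intro c i₁ i₂ i₃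
    apply Summable.mul_left
    apply Summable.of_abs
    apply Summable.of_nonneg_of_le (fun j => abs_nonneg _)
      (fun j => ?_) (((hs2 i₂).add (hs2 i₃)).mul_left (M / 2))
    have h1 : |a (j + i₁) * a (j + i₂) * a (j + i₃)|
        = |a (j + i₁)| * |a (j + i₂)| * |a (j + i₃)| := by
      rw [abs_mul, abs_mul]
    rw [h1]
    have h2 := hb (j + i₁)
    have h3 : |a (j + i₂)| * |a (j + i₃)| ≤ ((a (j + i₂)) ^ 2 + (a (j + i₃)) ^ 2) / 2 := by
      nlinarith [sq_nonneg (|a (j + i₂)| - |a (j + i₃)|), sq_abs (a (j + i₂)),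
        sq_abs (a (j + i₃))]
    have h4 : (0:ℝ) ≤ |a (j + i₂)| * |a (j + i₃)| :=
      mul_nonneg (abs_nonneg _) (abs_nonneg _)
    nlinarith [abs_nonneg (a (j + i₁))]
  -- telescoping function
  set h : ℤ → ℝ := fun j =>
    ((a (j + 1)) ^ 3 / 6 - (a j) ^ 2 * a (j + 1) / 2 + (a j) ^ 3 / 3) / Δx ^ 3 with hhdef
  have hh : Summable h := by
    have := ((key (1 / (6 * Δx ^ 3)) 1 1 1).sub
      (key (1 / (2 * Δx ^ 3)) 0 0 1)).add (key (1 / (3 * Δx ^ 3)) 0 0 0)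
    apply this.congr
    intro j
    simp only [hhdef, add_zero]
    field_simp
  have hh' : Summable (fun j => h (j - 1)) := (Equiv.subRight (1 : ℤ)).summable_iff.mpr hh
  have hF1 : Summable (fun j => Dp Δx a j * (Dp Δx a j) ^ 2) := by
    have := (((key (1 / Δx ^ 3) 1 1 1).sub (key (3 / Δx ^ 3) 0 1 1)).add
      (key (3 / Δx ^ 3) 0 0 1)).sub (key (1 / Δx ^ 3) 0 0 0)
    apply this.congr
    intro j
    simp only [Dp, add_zero]
    field_simp
    ring
  have hF2 : Summable (fun j => Dc Δx a j * (Dc Δx a j) ^ 2) := by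
    have := (((key (1 / (8 * Δx ^ 3)) 1 1 1).sub (key (3 / (8 * Δx ^ 3)) (-1) 1 1)).add
      (key (3 / (8 * Δx ^ 3)) (-1) (-1) 1)).sub (key (1 / (8 * Δx ^ 3)) (-1) (-1) (-1))
    apply this.congr
    intro j
    simp only [Dc, ← sub_eq_add_neg]
    field_simp
    ring
  have hFL : Summable (fun j => Dc Δx (fun i => (a i) ^ 2 / 2) j * Dp Δx (Dm Δx a) j) := by
    have := (((key (1 / (4 * Δx ^ 3)) 1 1 1).sub (key (2 / (4 * Δx ^ 3)) 0 1 1)).add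
      ((key (1 / (4 * Δx ^ 3)) (-1) 1 1).sub (key (1 / (4 * Δx ^ 3)) (-1) (-1) 1))).add
      ((key (2 / (4 * Δx ^ 3)) (-1) (-1) 0).sub (key (1 / (4 * Δx ^ 3)) (-1) (-1) (-1)))
    apply this.congr
    intro j
    simp only [Dp, Dm, Dc, add_sub_cancel_right, add_zero, ← sub_eq_add_neg]
    field_simp
    ring
  have heq : ∀ j, Dc Δx (fun i => (a i) ^ 2 / 2) j * Dp Δx (Dm Δx a) j
      = ((1 / 6) * (Dp Δx a j * (Dp Δx a j) ^ 2)
          - (2 / 3) * (Dc Δx a j * (Dc Δx a j) ^ 2)) + (h j - h (j - 1)) := by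
    intro j
    simp only [Dp, Dm, Dc, hhdef, add_sub_cancel_right, sub_add_cancel]
    field_simp
    ring
  have hsplit : (∑' j, Dc Δx (fun i => (a i) ^ 2 / 2) j * Dp Δx (Dm Δx a) j)
      = (1 / 6) * (∑' j, Dp Δx a j * (Dp Δx a j) ^ 2)
        - (2 / 3) * (∑' j, Dc Δx a j * (Dc Δx a j) ^ 2) := by
    rw [tsum_congr heq]
    rw [Summable.tsum_add ((hF1.mul_left _).sub (hF2.mul_left _)) (hh.sub hh')]
    rw [Summable.tsum_sub (hF1.mul_left _) (hF2.mul_left _), Summable.tsum_sub hh hh']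
    rw [tsum_mul_left, tsum_mul_left]
    have hT : (∑' j, h (j - 1)) = ∑' j, h j := (Equiv.subRight (1 : ℤ)).tsum_eq h
    rw [hT]
    ring
  simp only [ip]
  rw [hsplit]
  ring
end
end

section
/- For any square-summable sequences a, b: ℤ → ℝ and Δx > 0, one has ⟨a, D(ab)⟩ = ⟨D₊(b), (a·𝒮⁺a)/2⟩, where D is the centered difference, D₊ the forward difference, and (a·𝒮⁺a)_j = a_j a_{j+1}. -/
noncomputable section
/-! With `p j = a j * a (j + 1)`, both inner sums equal `(∑ p j b (j + 1) - ∑ p j b j) / (2 Δx)`: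
the right one termwise, the left one after reindexing `j ↦ j + 1` in the `a (j - 1) b (j - 1)` half
of the centred difference. Square-summability makes `p` summable and `b` bounded, so every series
involved converges and may be split. -/

section SquareSummable

variable {ι : Type*}

theorem summable_mul_of_summable_sq {f g : ι → ℝ} (hf : Summable fun i => f i ^ 2)
    (hg : Summable fun i => g i ^ 2) : Summable fun i => f i * g i :=
  Summable.of_norm_bounded ((hf.add hg).div_const 2) fun i => by
    rw [Real.norm_eq_abs, abs_mul]
    nlinarith [sq_nonneg (|f i| - |g i|), sq_abs (f i), sq_abs (g i)]

theorem abs_le_sqrt_tsum_sq {f : ι → ℝ} (hf : Summable fun i => f i ^ 2) (i : ι) :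
    |f i| ≤ √(∑' j, f j ^ 2) :=
  Real.abs_le_sqrt (hf.le_tsum i fun j _ => sq_nonneg (f j))

theorem Summable.mul_of_abs_le {f c : ι → ℝ} {C : ℝ} (hf : Summable f) (hc : ∀ i, |c i| ≤ C) :
    Summable fun i => f i * c i :=
  Summable.of_norm_bounded (hf.abs.mul_right C) fun i => by
    rw [Real.norm_eq_abs, abs_mul]
    exact mul_le_mul_of_nonneg_left (hc i) (abs_nonneg (f i))

theorem summable_mul_mul_of_summable_sq {f g c : ι → ℝ} (hf : Summable fun i => f i ^ 2)
    (hg : Summable fun i => g i ^ 2) (hc : Summable fun i => c i ^ 2) :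
    Summable fun i => f i * g i * c i :=
  (summable_mul_of_summable_sq hf hg).mul_of_abs_le (abs_le_sqrt_tsum_sq hc)

end SquareSummable

theorem Summable.comp_add_one {M : Type*} [AddCommMonoid M] [TopologicalSpace M] {f : ℤ → M}
    (hf : Summable f) : Summable fun j => f (j + 1) :=
  (Equiv.addRight (1 : ℤ)).summable_iff.2 hf

theorem tsum_sub_comp_sub_one {G : Type*} [AddCommGroup G] [TopologicalSpace G]
    [IsTopologicalAddGroup G] [T2Space G] {f g : ℤ → G} (hf : Summable f) (hg : Summable g) :
    ∑' j, (f j - g (j - 1)) = ∑' j, f j - ∑' j, g j := by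
  have hg' : Summable fun j => g (j - 1) := (Equiv.subRight (1 : ℤ)).summable_iff.2 hg
  rw [hf.tsum_sub hg']
  exact congrArg _ ((Equiv.subRight (1 : ℤ)).tsum_eq g)

theorem stmt11_general (Δx : ℝ) (a b : ℤ → ℝ)
    (ha : Summable fun j : ℤ => (a j) ^ 2) (hb : Summable fun j : ℤ => (b j) ^ 2) :
    ip Δx a (Dc Δx (fun i => a i * b i)) = ip Δx (Dp Δx b) (fun j => a j * a (j + 1) / 2) := by
  have ha' : Summable fun j => a (j + 1) ^ 2 := ha.comp_add_one
  have hf : Summable fun j => a j * a (j + 1) * b (j + 1) :=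
    summable_mul_mul_of_summable_sq ha ha' hb.comp_add_one
  have hg : Summable fun j => a j * a (j + 1) * b j := summable_mul_mul_of_summable_sq ha ha' hb
  have lhs : ∑' j, a j * Dc Δx (fun i => a i * b i) j
      = (∑' j, a j * a (j + 1) * b (j + 1) - ∑' j, a j * a (j + 1) * b j) / (2 * Δx) := by
    rw [← tsum_sub_comp_sub_one hf hg, ← tsum_div_const]
    exact tsum_congr fun j => by simp only [Dc, sub_add_cancel]; ring
  have rhs : ∑' j, Dp Δx b j * (a j * a (j + 1) / 2)
      = (∑' j, a j * a (j + 1) * b (j + 1) - ∑' j, a j * a (j + 1) * b j) / (2 * Δx) := by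
    rw [← hf.tsum_sub hg, ← tsum_div_const]
    exact tsum_congr fun j => by simp only [Dp]; ring
  rw [ip, ip, lhs, rhs]

/-- `⟨a, D(ab)⟩ = ⟨D₊(b), (a·𝒮⁺a)/2⟩`. -/
theorem stmt11 (Δx : ℝ) (hΔx : 0 < Δx) (a b : ℤ → ℝ)
    (ha : Summable fun j : ℤ => (a j) ^ 2) (hb : Summable fun j : ℤ => (b j) ^ 2) :
    ip Δx a (Dc Δx (fun i => a i * b i)) = ip Δx (Dp Δx b) (fun j => a j * a (j + 1) / 2) :=
  stmt11_general Δx a b ha hb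
end
end
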